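/- arXiv:2411.18783 — 4 statements merged into one kernel-verified Lean document; each statement's English description precedes it below -/
import Mathlib

section
/- In a group G with elements x_1,...,x_{n-1} satisfying the braid relations, with λ_{i,j} = x_{j-1}^{-1} ··· x_{i+1}^{-1} x_i^2 x_{i+1} ··· x_{j-1}, conjugation by x_k with i+1 ≤ k ≤ j-2 fixes λ_{i,j}: x_k^{-1} λ_{i,j} x_k = λ_{i,j}. -/
/-- `chain x i j = x_{i+1} * x_{i+2} * ⋯ * x_{j-1}` (empty when `j ≤ i+1`). -/
def chain {G : Type*} [Group G] (x : ℕ → G) (i j : ℕ) : G :=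
  ((List.range (j - 1 - i)).map fun t => x (i + 1 + t)).prod

/-- `lam x i j = x_{j-1}⁻¹ ⋯ x_{i+1}⁻¹ * x_i² * x_{i+1} ⋯ x_{j-1}`
(the element `_xλ_{i,j}` of the paper). -/
def lam {G : Type*} [Group G] (x : ℕ → G) (i j : ℕ) : G :=
  (chain x i j)⁻¹ * (x i) ^ 2 * chain x i j

lemma range_prod_split {G : Type*} [Group G] (f : ℕ → G) (a b : ℕ) :
    ((List.range (a + b)).map f).prod
      = ((List.range a).map f).prod * ((List.range b).map (fun t => f (a + t))).prod := by
  rw [List.range_add, List.map_append, List.prod_append, List.map_map]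
  rfl

/-- In a group with elements `x_1, …, x_{n-1}` satisfying the braid relations,
conjugation by `x_k` with `i + 1 ≤ k ≤ j - 2` fixes `λ_{i,j}`. -/
theorem stmt_6 (n : ℕ) (G : Type*) [Group G] (x : ℕ → G)
    (hbraid : ∀ i, 1 ≤ i → i + 1 ≤ n - 1 →
      x i * x (i + 1) * x i = x (i + 1) * x i * x (i + 1))
    (hcomm : ∀ i j, 1 ≤ i → i + 1 < j → j ≤ n - 1 → x i * x j = x j * x i)
    (i j k : ℕ) (h1 : 1 ≤ i) (hij : i < j) (hj : j ≤ n)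
    (hk1 : i + 1 ≤ k) (hk2 : k ≤ j - 2) :
    (x k)⁻¹ * lam x i j * x k = lam x i j := by
  obtain ⟨a, rfl⟩ : ∃ a, k = i + 1 + a := ⟨k - (i+1), by omega⟩
  obtain ⟨b, rfl⟩ : ∃ b, j = i + 1 + a + 2 + b := ⟨j - (i + 1 + a + 2), by omega⟩
  set k := i + 1 + a with hk
  have hkn : k + 2 ≤ n := by omega
  set Pa := ((List.range a).map fun t => x (i+1+t)).prod with hPa
  set Pb := ((List.range b).map fun t => x (k+2+t)).prod with hPb
  have hsplit : chain x i (k + 2 + b) = Pa * (x k * (x (k+1) * Pb)) := by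
    have h1' : k + 2 + b - 1 - i = a + (2 + b) := by omega
    have e1 : (fun t => x (i+1+(a+t))) = fun t => x (k + t) := by
      funext t; congr 1; omega
    have e2 : (fun t => x (k + (2+t))) = fun t => x (k+2+t) := by
      funext t; congr 1; omega
    rw [chain, h1', range_prod_split, e1, range_prod_split, e2]
    simp [List.range_succ, mul_assoc]
    rfl
  -- commutation facts
  have HA : Commute (x (k+1)) Pa := by
    apply Commute.list_prod_right
    intro g hg
    simp only [List.mem_map, List.mem_range] at hg
    obtain ⟨t, ht, rfl⟩ := hg
    exact (hcomm (i+1+t) (k+1) (by omega) (by omega) (by omega)).symm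
  have HB : Commute (x k) Pb := by
    apply Commute.list_prod_right
    intro g hg
    simp only [List.mem_map, List.mem_range] at hg
    obtain ⟨t, ht, rfl⟩ := hg
    exact hcomm k (k+2+t) (by omega) (by omega) (by omega)
  have hbr : x k * x (k+1) * x k = x (k+1) * x k * x (k+1) :=
    hbraid k (by omega) (by omega)
  have key : chain x i (k+2+b) * x k = x (k+1) * chain x i (k+2+b) := by
    rw [hsplit]
    calc Pa * (x k * (x (k+1) * Pb)) * x k
        = Pa * (x k * x (k+1) * (Pb * x k)) := by group
      _ = Pa * (x k * x (k+1) * (x k * Pb)) := by rw [← HB.eq]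
      _ = Pa * (x k * x (k+1) * x k * Pb) := by group
      _ = Pa * (x (k+1) * x k * x (k+1) * Pb) := by rw [hbr]
      _ = Pa * x (k+1) * (x k * (x (k+1) * Pb)) := by group
      _ = x (k+1) * Pa * (x k * (x (k+1) * Pb)) := by rw [← HA.eq]
      _ = x (k+1) * (Pa * (x k * (x (k+1) * Pb))) := by group
  have hcik : Commute (x i ^ 2) (x (k+1)) :=
    (show Commute (x i) (x (k+1)) from hcomm i (k+1) h1 (by omega) (by omega)).pow_left 2
  calc (x k)⁻¹ * lam x i (k+2+b) * x k
      = (chain x i (k+2+b) * x k)⁻¹ * x i ^ 2 * (chain x i (k+2+b) * x k) := by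
        rw [lam]; group
    _ = (x (k+1) * chain x i (k+2+b))⁻¹ * x i ^ 2 * (x (k+1) * chain x i (k+2+b)) := by
        rw [key]
    _ = (chain x i (k+2+b))⁻¹ * ((x (k+1))⁻¹ * (x i ^ 2 * x (k+1))) * chain x i (k+2+b) := by
        group
    _ = lam x i (k+2+b) := by rw [hcik.eq, lam]; group
end

section
/- In a group G with elements x_1,...,x_{n-1} satisfying the braid relations, with λ_{i,j} as above, conjugation by x_{j-1} satisfies x_{j-1}^{-1} λ_{i,j} x_{j-1} = λ_{j-1,j}^{-1} · λ_{i,j-1} · λ_{j-1,j} for i < j-1, where λ_{j-1,j} = x_{j-1}^2. -/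
lemma chain_succ {G : Type*} [Group G] (x : ℕ → G) (i j : ℕ) (hij : i < j - 1) :
    chain x i j = chain x i (j - 1) * x (j - 1) := by
  have h : j - 1 - i = (j - 1 - 1 - i) + 1 := by omega
  have h2 : i + 1 + (j - 1 - 1 - i) = j - 1 := by omega
  simp [chain, h, List.range_succ, h2]

lemma chain_self {G : Type*} [Group G] (x : ℕ → G) (j : ℕ) :
    chain x (j - 1) j = 1 := by
  have : j - 1 - (j - 1) = 0 := by omega
  simp [chain, this]

/-- In a group with elements `x_1, …, x_{n-1}` satisfying the braid relations,
`x_{j-1}⁻¹ * λ_{i,j} * x_{j-1} = λ_{j-1,j}⁻¹ * λ_{i,j-1} * λ_{j-1,j}` for `i < j - 1`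
(note `λ_{j-1,j} = x_{j-1}²`). -/
theorem stmt_7 (n : ℕ) (G : Type*) [Group G] (x : ℕ → G)
    (hbraid : ∀ i, 1 ≤ i → i + 1 ≤ n - 1 →
      x i * x (i + 1) * x i = x (i + 1) * x i * x (i + 1))
    (hcomm : ∀ i j, 1 ≤ i → i + 1 < j → j ≤ n - 1 → x i * x j = x j * x i)
    (i j : ℕ) (h1 : 1 ≤ i) (hij : i < j - 1) (hj : j ≤ n) :
    (x (j - 1))⁻¹ * lam x i j * x (j - 1) =
      (lam x (j - 1) j)⁻¹ * lam x i (j - 1) * lam x (j - 1) j := by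
  simp only [lam, chain_succ x i j hij, chain_self x j]
  group
  rw [zpow_two (x (j - 1))]
  group
end

section
/- Under the same hypotheses, with the additional relation x_{i-1}^{-1} a_i x_{i-1} = x_i a_{i-1} x_i^{-1} (a consequence of the mixed braid relation), one has x_{i-1}^{-1} μ_{i,j} x_{i-1} = λ_{i,j} · μ_{i-1,j} · λ_{i,j}^{-1} for 1 < i < j ≤ n, where λ_{i,j} = x_{j-1}^{-1} ··· x_{i+1}^{-1} x_i^2 x_{i+1} ··· x_{j-1} and μ_{i,j} = x_{j-1}^{-1} ··· x_{i+1}^{-1} a_i x_i x_{i+1} ··· x_{j-1}. -/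
/-- `mu x a i j = x_{j-1}⁻¹ ⋯ x_{i+1}⁻¹ * (a_i x_i) * x_{i+1} ⋯ x_{j-1}`
(the element `_aλ_{i,j}` of the paper). -/
def mu {G : Type*} [Group G] (x a : ℕ → G) (i j : ℕ) : G :=
  (chain x i j)⁻¹ * (a i * x i) * chain x i j

private lemma conj_conj {G : Type*} [Group G] (g c y : G) (h : g * c = c * g) :
    g⁻¹ * (c⁻¹ * y * c) * g = c⁻¹ * (g⁻¹ * y * g) * c := by
  have h1 : g⁻¹ * c⁻¹ = c⁻¹ * g⁻¹ := by
    rw [← mul_inv_rev, ← mul_inv_rev, h]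
  have h2 : c * g = g * c := h.symm
  calc g⁻¹ * (c⁻¹ * y * c) * g = (g⁻¹ * c⁻¹) * y * (c * g) := by group
    _ = (c⁻¹ * g⁻¹) * y * (g * c) := by rw [h1, h2]
    _ = c⁻¹ * (g⁻¹ * y * g) * c := by group

/-- Under the hypotheses of the previous statement, together with the relation
`x_{i-1}⁻¹ a_i x_{i-1} = x_i a_{i-1} x_i⁻¹`, one has
`x_{i-1}⁻¹ μ_{i,j} x_{i-1} = λ_{i,j} · μ_{i-1,j} · λ_{i,j}⁻¹` for `1 < i < j ≤ n`. -/
theorem stmt_9 (n : ℕ) (G : Type*) [Group G] (x a : ℕ → G)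
    (hbraid : ∀ i, 1 ≤ i → i + 1 ≤ n - 1 →
      x i * x (i + 1) * x i = x (i + 1) * x i * x (i + 1))
    (hcomm : ∀ i j, 1 ≤ i → i + 1 < j → j ≤ n - 1 → x i * x j = x j * x i)
    (hcomma : ∀ i j, 1 ≤ i → 1 ≤ j → i ≤ n - 1 → j ≤ n - 1 →
      (i + 1 < j ∨ j + 1 < i) → x i * a j = a j * x i)
    (hmixed : ∀ i, 1 ≤ i → i + 1 ≤ n - 1 →
      x i * x (i + 1) * a i = a (i + 1) * x i * x (i + 1))
    (hextra : ∀ i, 2 ≤ i → i ≤ n - 1 →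
      (x (i - 1))⁻¹ * a i * x (i - 1) = x i * a (i - 1) * (x i)⁻¹)
    (i j : ℕ) (h1 : 1 < i) (hij : i < j) (hj : j ≤ n) :
    (x (i - 1))⁻¹ * mu x a i j * x (i - 1) =
      lam x i j * mu x a (i - 1) j * (lam x i j)⁻¹ := by
  set C := chain x i j with hCdef
  -- x (i-1) commutes with C
  have hC : x (i - 1) * C = C * x (i - 1) := by
    rw [hCdef]
    refine (Commute.list_prod_right _ _ fun z hz => ?_)
    simp only [List.mem_map, List.mem_range] at hz
    obtain ⟨t, ht, rfl⟩ := hz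
    exact hcomm (i - 1) (i + 1 + t) (by omega) (by omega) (by omega)
  -- chain decomposition
  have hchain : chain x (i - 1) j = x i * C := by
    rw [hCdef]
    unfold chain
    have h : j - 1 - (i - 1) = (j - 1 - i) + 1 := by omega
    rw [h, List.range_succ_eq_map, List.map_cons, List.prod_cons, List.map_map]
    congr 1
    · congr 1; omega
    · refine congrArg List.prod (List.map_congr_left fun t _ => ?_)
      show x (i - 1 + 1 + t.succ) = x (i + 1 + t)
      congr 1
      omega
  -- braid and extra relations at i-1
  have hi : i - 1 + 1 = i := by omega
  have hb := hbraid (i - 1) (by omega) (by omega)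
  rw [hi] at hb
  have hx := hextra i (by omega) (by omega)
  -- conjugation of x i by x (i-1)
  have h3 : (x (i - 1))⁻¹ * x i * x (i - 1) = x i * x (i - 1) * (x i)⁻¹ := by
    have := hb.symm
    calc (x (i - 1))⁻¹ * x i * x (i - 1)
        = (x (i - 1))⁻¹ * (x i * x (i - 1) * x i) * (x i)⁻¹ := by group
      _ = (x (i - 1))⁻¹ * (x (i - 1) * x i * x (i - 1)) * (x i)⁻¹ := by rw [hb]
      _ = x i * x (i - 1) * (x i)⁻¹ := by group
  -- key identity
  have key : (x (i - 1))⁻¹ * (a i * x i) * x (i - 1) =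
      x i * (a (i - 1) * x (i - 1)) * (x i)⁻¹ := by
    calc (x (i - 1))⁻¹ * (a i * x i) * x (i - 1)
        = ((x (i - 1))⁻¹ * a i * x (i - 1)) * ((x (i - 1))⁻¹ * x i * x (i - 1)) := by
          group
      _ = (x i * a (i - 1) * (x i)⁻¹) * (x i * x (i - 1) * (x i)⁻¹) := by rw [hx, h3]
      _ = x i * (a (i - 1) * x (i - 1)) * (x i)⁻¹ := by group
  rw [mu, mu, lam, hchain, ← hCdef]
  calc (x (i - 1))⁻¹ * (C⁻¹ * (a i * x i) * C) * x (i - 1)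
      = C⁻¹ * ((x (i - 1))⁻¹ * (a i * x i) * x (i - 1)) * C := conj_conj _ _ _ hC
    _ = C⁻¹ * (x i * (a (i - 1) * x (i - 1)) * (x i)⁻¹) * C := by rw [key]
    _ = C⁻¹ * x i ^ 2 * C * ((x i * C)⁻¹ * (a (i - 1) * x (i - 1)) * (x i * C)) *
        (C⁻¹ * x i ^ 2 * C)⁻¹ := by group
end

section
/- For any σ ∈ S_n, there exist a permutation τ ∈ S_m for some m ≥ n obtained from σ by a finite sequence of conjugations and stabilizations (replacing the current ρ ∈ S_k by its image in S_{k+1} composed with (k, k+1)) such that τ is a power of the m-cycle (1 2 ··· m). -/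
open Equiv Equiv.Perm Finset

section Aux

variable {α : Type*} [DecidableEq α] [Fintype α]

lemma cycle_insert {c : Perm α} (hc : c.IsCycle) {a b : α}
    (ha : c a ≠ a) (hb : c b = b) (hab : a ≠ b) :
    IsCycle (c * Equiv.swap a b) ∧ (c * Equiv.swap a b).support = insert b c.support := by
  set e := c * Equiv.swap a b with he
  have hca : c a ≠ b := by
    intro h; exact hab (c.injective (h.trans hb.symm))
  have hea : e a = b := by simp [he, Equiv.swap_apply_left, hb]
  have heb : e b = c a := by simp [he, Equiv.swap_apply_right]
  have hex : ∀ x, x ≠ a → x ≠ b → e x = c x := by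
    intro x hxa hxb; simp [he, Equiv.swap_apply_of_ne_of_ne hxa hxb]
  have hbsupp : b ∉ c.support := by simp [hb]
  have key : ∀ j : ℕ, 1 ≤ j → SameCycle e b ((c ^ j) a) := by
    intro j
    induction j with
    | zero => omega
    | succ j ih =>
      intro _
      rcases Nat.eq_or_lt_of_le (Nat.one_le_iff_ne_zero.mpr (Nat.succ_ne_zero j)) with h1 | h1
      · have : j = 0 := by omega
        subst this
        exact ⟨1, by simp [heb]⟩
      · have hj1 : 1 ≤ j := by omega
        by_cases hja : (c ^ j) a = a
        · rw [pow_succ', mul_apply, hja]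
          exact ⟨1, by simp [heb]⟩
        · have hmem : (c ^ j) a ∈ c.support := by
            have : a ∈ c.support := mem_support.mpr ha
            simpa using (c.pow_apply_mem_support (n := j)).mpr this
          have hjb : (c ^ j) a ≠ b := fun h => hbsupp (h ▸ hmem)
          have step : e ((c ^ j) a) = (c ^ (j+1)) a := by
            rw [hex _ hja hjb, pow_succ', mul_apply]
          exact (ih hj1).trans ⟨1, by simp [step]⟩
  have hall : ∀ y, e y ≠ y → SameCycle e b y := by
    intro y hy
    by_cases hyb : y = b
    · subst hyb; exact SameCycle.refl _ _
    by_cases hya : y = a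
    · refine hya ▸ SameCycle.symm ?_
      exact ⟨1, by simp [hea]⟩
    · have hyc : c y ≠ y := by
        intro h
        exact hy (by rw [hex _ hya hyb, h])
      obtain ⟨i, hi⟩ := hc.exists_pow_eq ha hyc
      rcases Nat.eq_zero_or_pos i with rfl | hi1
      · simp at hi; exact absurd hi.symm hya
      · exact hi ▸ key i hi1
  have hmoveb : e b ≠ b := by rw [heb]; exact hca
  constructor
  · exact ⟨b, hmoveb, fun y hy => hall y hy⟩
  · ext y
    simp only [mem_support, mem_insert]
    constructor
    · intro hy
      by_cases hyb : y = b
      · left; exact hyb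
      by_cases hya : y = a
      · right; exact hya ▸ ha
      · right; rw [hex _ hya hyb] at hy; exact hy
    · rintro (rfl | hy)
      · exact hmoveb
      · by_cases hya : y = a
        · rw [hya, hea]; exact fun h => hab h.symm
        · have hyb : y ≠ b := fun h => hbsupp (by simpa [h] using hy)
          rw [hex _ hya hyb]; exact hy

variable {α : Type*} [DecidableEq α] [Fintype α]

lemma cycleOf_conj' (σ π : Perm α) (x : α) :
    (π * σ * π⁻¹).cycleOf (π x) = π * σ.cycleOf x * π⁻¹ := by
  have hsc : ∀ y, (π * σ * π⁻¹).SameCycle (π x) (π y) ↔ σ.SameCycle x y := by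
    intro y
    constructor
    · rintro ⟨i, hi⟩
      refine ⟨i, ?_⟩
      rw [conj_zpow] at hi
      simpa using hi
    · rintro ⟨i, hi⟩
      refine ⟨i, ?_⟩
      rw [conj_zpow]
      simpa using congrArg π hi
  ext y
  rcases Equiv.surjective π y with ⟨z, rfl⟩
  by_cases h : σ.SameCycle x z
  · rw [SameCycle.cycleOf_apply ((hsc z).mpr h)]
    simp [SameCycle.cycleOf_apply h]
  · rw [cycleOf_apply_of_not_sameCycle (fun hh => h ((hsc z).mp hh))]
    simp [cycleOf_apply_of_not_sameCycle h]

variable {β : Type*} [DecidableEq β] [Fintype β]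

lemma cycleOf_extendDomain' {p : β → Prop} [DecidablePred p] (f : α ≃ Subtype p)
    (g : Perm α) (x : α) :
    (g.extendDomain f).cycleOf ((f x : Subtype p) : β) = (g.cycleOf x).extendDomain f := by
  ext y
  by_cases hy : p y
  · set z := f.symm ⟨y, hy⟩ with hz
    have hyz : ((f z : Subtype p) : β) = y := by simp [hz]
    rw [← hyz]
    have hsc : (g.extendDomain f).SameCycle ((f x : Subtype p) : β) ((f z : Subtype p) : β)
        ↔ g.SameCycle x z := sameCycle_extendDomain
    by_cases h : g.SameCycle x z
    · rw [SameCycle.cycleOf_apply (hsc.mpr h), extendDomain_apply_image,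
        extendDomain_apply_image, SameCycle.cycleOf_apply h]
    · rw [cycleOf_apply_of_not_sameCycle (fun hh => h (hsc.mp hh)),
        extendDomain_apply_image, cycleOf_apply_of_not_sameCycle h]
  · have h1 : (g.cycleOf x).extendDomain f y = y := extendDomain_apply_not_subtype _ f hy
    rw [h1]
    apply cycleOf_apply_of_not_sameCycle
    rintro ⟨i, hi⟩
    rw [← extendDomain_zpow, extendDomain_apply_image] at hi
    exact hy (hi ▸ (f ((g ^ i) x)).prop)

def sl {k : ℕ} (σ : Equiv.Perm (Fin (k+1))) : ℕ :=
  if σ (Fin.last k) = Fin.last k then 1 else (σ.cycleOf (Fin.last k)).support.card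

def Ot (k : ℕ) (σ : Equiv.Perm (Fin (k+1))) : Multiset ℕ :=
  σ.cycleType + Multiset.replicate (k + 1 - σ.cycleType.sum) 1

lemma sum_cycleType_le (k : ℕ) (σ : Equiv.Perm (Fin (k+1))) : σ.cycleType.sum ≤ k + 1 := by
  rw [Equiv.Perm.sum_cycleType]
  simpa using Finset.card_le_univ σ.support

lemma sum_cycleType_le_of_fix (k : ℕ) (σ : Equiv.Perm (Fin (k+1)))
    (h : σ (Fin.last k) = Fin.last k) : σ.cycleType.sum ≤ k := by
  rw [Equiv.Perm.sum_cycleType]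
  have hsub : σ.support ⊆ Finset.univ.erase (Fin.last k) := by
    intro x hx
    refine Finset.mem_erase.mpr ⟨?_, Finset.mem_univ _⟩
    rintro rfl
    exact (Equiv.Perm.mem_support.mp hx) h
  calc σ.support.card ≤ (Finset.univ.erase (Fin.last k)).card := Finset.card_le_card hsub
    _ = k := by simp [Finset.card_erase_of_mem]

-- cycleType of the stabilization
lemma stab_cycleType (k : ℕ) (σ : Equiv.Perm (Fin (k+1))) :
    (σ.viaFintypeEmbedding Fin.castSuccEmb *
      Equiv.swap (Fin.last k).castSucc (Fin.last (k+1))).cycleType =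
    if σ (Fin.last k) = Fin.last k then σ.cycleType + {2}
    else (sl σ + 1) ::ₘ σ.cycleType.erase (sl σ) := by
  set b := Fin.last (k+1) with hbdef
  set l := (Fin.last k).castSucc with hldef
  set ι := σ.viaFintypeEmbedding Fin.castSuccEmb with hι
  have hlb : l ≠ b := by
    simp [hldef, hbdef]
  have hbr : b ∉ Set.range (Fin.castSuccEmb : Fin (k+1) ↪ Fin (k+2)) := by
    rintro ⟨x, hx⟩
    exact (Fin.castSucc_lt_last x).ne hx
  have hιb : ι b = b := Equiv.Perm.viaFintypeEmbedding_apply_notMem_range _ _ hbr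
  have hιl : ι l = (σ (Fin.last k)).castSucc := by
    have := Equiv.Perm.viaFintypeEmbedding_apply_image σ Fin.castSuccEmb (Fin.last k)
    simpa [hldef] using this
  have hcycι : ι.cycleType = σ.cycleType := by
    rw [hι, Equiv.Perm.viaFintypeEmbedding, Equiv.Perm.cycleType_extendDomain]
  by_cases hfix : σ (Fin.last k) = Fin.last k
  · rw [if_pos hfix]
    have hιll : ι l = l := by rw [hιl, hfix]
    have hdisj : ι.Disjoint (Equiv.swap l b) := by
      intro x
      by_cases hxl : x = l
      · left; rw [hxl, hιll]
      by_cases hxb : x = b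
      · left; rw [hxb, hιb]
      · right; exact Equiv.swap_apply_of_ne_of_ne hxl hxb
    rw [hdisj.cycleType_mul, hcycι]
    congr 1
    rw [(Equiv.Perm.isCycle_swap hlb).cycleType]
    simp [Equiv.Perm.support_swap hlb, Finset.card_insert_of_notMem, hlb]
  · rw [if_neg hfix]
    have hιlne : ι l ≠ l := by
      rw [hιl, hldef]
      simpa using fun h => hfix (Fin.castSucc_injective _ h)
    set c := ι.cycleOf l with hc
    have hcext : c = (σ.cycleOf (Fin.last k)).extendDomain Fin.castSuccEmb.toEquivRange := by
      rw [hc, hι, Equiv.Perm.viaFintypeEmbedding]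
      have := cycleOf_extendDomain' (Fin.castSuccEmb.toEquivRange) σ (Fin.last k)
      exact this
  
    have hs : c.support.card = sl σ := by
      rw [hcext, Equiv.Perm.card_support_extend_domain, sl, if_neg hfix]
    have hccyc : c.IsCycle := Equiv.Perm.isCycle_cycleOf ι hιlne
    have hcfac : c ∈ ι.cycleFactorsFinset :=
      Equiv.Perm.cycleOf_mem_cycleFactorsFinset_iff.mpr (Equiv.Perm.mem_support.mpr hιlne)
    have hsmem : sl σ ∈ ι.cycleType := by
      rw [Equiv.Perm.cycleType_def]
      exact Multiset.mem_map.mpr ⟨c, by simpa using hcfac, hs⟩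
    set d := ι * c⁻¹ with hd
    have hdisj : d.Disjoint c := Equiv.Perm.disjoint_mul_inv_of_mem_cycleFactorsFinset hcfac
    have hdcyc : d.cycleType = ι.cycleType.erase (sl σ) := by
      rw [hd, Equiv.Perm.cycleType_mul_inv_mem_cycleFactorsFinset_eq_sub hcfac,
        hccyc.cycleType, hs]
      simp [Multiset.sub_singleton]
    -- b is fixed by c and by d
    have hbc : c b = b := by
      have : b ∉ c.support := fun hb => (Equiv.Perm.mem_support.mp
        (Equiv.Perm.support_cycleOf_le ι l hb)) hιb
      simpa [Equiv.Perm.mem_support, not_not] using this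
    have hdb : d b = b := by
      rw [hd, Equiv.Perm.mul_apply]
      have : c⁻¹ b = b := by
        rw [Equiv.Perm.inv_eq_iff_eq, hbc]
      rw [this, hιb]
    have hcl : c l ≠ l := by
      rw [hc, Equiv.Perm.cycleOf_apply_self]; exact hιlne
    obtain ⟨hecyc, hesupp⟩ := cycle_insert hccyc hcl hbc hlb
    set e := c * Equiv.swap l b with he
    have hdecomp : ι * Equiv.swap l b = d * e := by
      rw [hd, he, mul_assoc, inv_mul_cancel_left]
    have hbnc : b ∉ c.support := by simp [Equiv.Perm.mem_support, hbc]
    have hde : d.Disjoint e := by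
      rw [Equiv.Perm.disjoint_iff_disjoint_support, he, hesupp]
      rw [Finset.disjoint_insert_right]
      refine ⟨by simp [Equiv.Perm.mem_support, hdb], ?_⟩
      exact (Equiv.Perm.disjoint_iff_disjoint_support.mp hdisj)
    rw [hdecomp, hde.cycleType_mul, hdcyc, hecyc.cycleType, hesupp, hcycι,
      Finset.card_insert_of_notMem hbnc, hs, add_comm]
    simp [Multiset.singleton_add]
lemma Ot_stab (k : ℕ) (σ : Equiv.Perm (Fin (k+1))) :
    Ot (k+1) (σ.viaFintypeEmbedding Fin.castSuccEmb *
      Equiv.swap (Fin.last k).castSucc (Fin.last (k+1))) =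
    (sl σ + 1) ::ₘ (Ot k σ).erase (sl σ) := by
  unfold Ot
  rw [stab_cycleType]
  by_cases hfix : σ (Fin.last k) = Fin.last k
  · rw [if_pos hfix]
    have h1 : sl σ = 1 := by rw [sl, if_pos hfix]
    have hlt := sum_cycleType_le_of_fix k σ hfix
    have hf1 : 1 ≤ k + 1 - σ.cycleType.sum := by omega
    have herase : (σ.cycleType + Multiset.replicate (k + 1 - σ.cycleType.sum) 1).erase 1
        = σ.cycleType + Multiset.replicate (k - σ.cycleType.sum) 1 := by
      rw [Multiset.erase_add_right_pos _ (Multiset.mem_replicate.mpr ⟨by omega, rfl⟩)]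
      congr 1
      have : k + 1 - σ.cycleType.sum = (k - σ.cycleType.sum) + 1 := by omega
      rw [this, Multiset.replicate_succ, Multiset.erase_cons_head]
    rw [h1, herase]
    have hsum2 : (σ.cycleType + ({2} : Multiset ℕ)).sum = σ.cycleType.sum + 2 := by
      simp
    rw [hsum2]
    have : k + 1 + 1 - (σ.cycleType.sum + 2) = k - σ.cycleType.sum := by omega
    rw [this]
    rw [← Multiset.singleton_add]
    abel
  · rw [if_neg hfix]
    have hsmem : sl σ ∈ σ.cycleType := by
      rw [sl, if_neg hfix, Equiv.Perm.cycleType_def]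
      have hc : σ.cycleOf (Fin.last k) ∈ σ.cycleFactorsFinset :=
        Equiv.Perm.cycleOf_mem_cycleFactorsFinset_iff.mpr (Equiv.Perm.mem_support.mpr hfix)
      exact Multiset.mem_map.mpr ⟨_, by simpa using hc, rfl⟩
    have hse : sl σ + (σ.cycleType.erase (sl σ)).sum = σ.cycleType.sum := by
      conv_rhs => rw [← Multiset.cons_erase hsmem]
      simp
    have hsum : ((sl σ + 1) ::ₘ σ.cycleType.erase (sl σ)).sum = σ.cycleType.sum + 1 := by
      rw [Multiset.sum_cons]
      omega
    rw [hsum]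
    have hles := sum_cycleType_le k σ
    have : k + 1 + 1 - (σ.cycleType.sum + 1) = k + 1 - σ.cycleType.sum := by omega
    rw [this]
    rw [Multiset.erase_add_left_pos _ hsmem, Multiset.cons_add]

lemma Ot_conj (k : ℕ) (σ π : Equiv.Perm (Fin (k+1))) : Ot k (π * σ * π⁻¹) = Ot k σ := by
  simp [Ot, Equiv.Perm.cycleType_conj]

lemma conj_place (k : ℕ) (σ : Equiv.Perm (Fin (k+1))) {o : ℕ} (ho : o ∈ Ot k σ) :
    ∃ π : Equiv.Perm (Fin (k+1)), sl (π * σ * π⁻¹) = o := by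
  rcases Multiset.mem_add.mp ho with hcyc | hrep
  · -- o is a cycle length: find a point on a cycle of that length
    have ho2 : 2 ≤ o := Equiv.Perm.two_le_of_mem_cycleType hcyc
    rw [Equiv.Perm.cycleType_def] at hcyc
    obtain ⟨c, hc, hco⟩ := Multiset.mem_map.mp hcyc
    have hcfac : c ∈ σ.cycleFactorsFinset := by simpa using hc
    have hcsupp : c.support.Nonempty := by
      rw [← Finset.card_pos]
      simp only [Function.comp] at hco
      omega
    obtain ⟨x, hx⟩ := hcsupp
    have hcx : c = σ.cycleOf x := Equiv.Perm.cycle_is_cycleOf hx hcfac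
    have hσx : σ x ≠ x := by
      have h1 : c x ≠ x := Equiv.Perm.mem_support.mp hx
      rw [hcx, Equiv.Perm.cycleOf_apply_self] at h1
      exact h1
    refine ⟨Equiv.swap x (Fin.last k), ?_⟩
    set π := Equiv.swap x (Fin.last k) with hπ
    have hπx : π x = Fin.last k := Equiv.swap_apply_left _ _
    have hlast : Fin.last k = π x := hπx.symm
    have hval : (π * σ * π⁻¹) (Fin.last k) = π (σ x) := by
      have hinv : π⁻¹ (Fin.last k) = x := by
        rw [← hπx, ← Equiv.Perm.mul_apply, inv_mul_cancel, Equiv.Perm.one_apply]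
      rw [Equiv.Perm.mul_apply, Equiv.Perm.mul_apply, hinv]
    have h2 : (π * σ * π⁻¹) (Fin.last k) ≠ Fin.last k := by
      rw [hval, hlast]
      exact fun h => hσx (π.injective h)
    rw [sl, if_neg h2, hlast, cycleOf_conj', Equiv.Perm.card_support_conj, ← hcx]
    simpa using hco
  · -- o = 1: find a fixed point
    have ho1 : o = 1 := (Multiset.mem_replicate.mp hrep).2
    have hf : 1 ≤ k + 1 - σ.cycleType.sum := by
      by_contra h
      simp only [not_le, Nat.lt_one_iff] at h
      rw [h] at hrep
      simp at hrep
    have hsum : σ.support.card ≤ k := by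
      have := Equiv.Perm.sum_cycleType σ
      omega
    have hex : ∃ x, σ x = x := by
      by_contra h
      push_neg at h
      have : σ.support = Finset.univ := Finset.eq_univ_iff_forall.mpr
        (fun x => Equiv.Perm.mem_support.mpr (h x))
      rw [this] at hsum
      simp at hsum
    obtain ⟨x, hx⟩ := hex
    refine ⟨Equiv.swap x (Fin.last k), ?_⟩
    have : (Equiv.swap x (Fin.last k) * σ * (Equiv.swap x (Fin.last k))⁻¹) (Fin.last k)
        = Fin.last k := by
      simp [Equiv.Perm.mul_apply, Equiv.swap_apply_right, hx]
    rw [sl, if_pos this, ho1]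

lemma cycleType_finRotate_pow (g L N : ℕ) (hg : 1 ≤ g) (hL : 2 ≤ L) (hNdef : N = g * L) :
    (finRotate N ^ g).cycleType = Multiset.replicate g L := by
  have hN2 : 2 ≤ N := hNdef ▸ le_trans hL (Nat.le_mul_of_pos_left L hg)
  set σ := finRotate N with hσ
  have hσc : σ.IsCycle := isCycle_finRotate_of_le hN2
  have hsupp : σ.support = Finset.univ := support_finRotate_of_le hN2
  have hmove : ∀ x : Fin N, σ x ≠ x := fun x =>
    Equiv.Perm.mem_support.mp (hsupp ▸ Finset.mem_univ x)
  have hcardN : ∀ x : Fin N, ((σ.cycleOf x).support).card = N := by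
    intro x
    rw [hσc.cycleOf_eq (hmove x), hsupp]
    simp
  have key : ∀ (x : Fin N) (a b : ℤ), (σ ^ a) x = (σ ^ b) x ↔ a % N = b % N := by
    intro x a b
    rw [Equiv.Perm.zpow_eq_zpow_on_iff σ (hmove x), hcardN x]
  set ρ := σ ^ g with hρ
  have hρz : ∀ i : ℤ, ρ ^ i = σ ^ ((g : ℤ) * i) := by
    intro i
    rw [hρ, ← zpow_natCast σ g, ← zpow_mul]
  have hρmove : ∀ x : Fin N, ρ x ≠ x := by
    intro x h
    have h0 : (σ ^ ((g : ℤ))) x = (σ ^ (0 : ℤ)) x := by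
      simpa [zpow_natCast] using h
    rw [key] at h0
    simp only [Int.zero_emod] at h0
    have hdvd : (N : ℤ) ∣ (g : ℤ) := Int.dvd_of_emod_eq_zero h0
    have : (N : ℕ) ∣ g := Int.natCast_dvd_natCast.mp (by exact_mod_cast hdvd)
    have hNg : N ≤ g := Nat.le_of_dvd (by omega) this
    have : g < N := by
      have : g * 1 < g * L := by
        apply Nat.mul_lt_mul_of_le_of_lt (le_refl g) (by omega) (by omega)
      omega
    omega
  have hLdvd : ∀ (j i : ℤ), j % L = i % L → (g : ℤ) * j % N = (g : ℤ) * i % N := by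
    intro j i h
    have h1 : (L : ℤ) ∣ (i - j) := Int.ModEq.dvd h
    obtain ⟨c, hc⟩ := h1
    have h2 : (N : ℤ) ∣ ((g : ℤ) * i - (g : ℤ) * j) := by
      refine ⟨c, ?_⟩
      rw [← mul_sub, hc]
      push_cast [hNdef]
      ring
    exact Int.ModEq.eq (Int.modEq_iff_dvd.mpr h2)
  have hcardL : ∀ x : Fin N, ((ρ.cycleOf x).support).card = L := by
    intro x
    have himg : (ρ.cycleOf x).support =
        Finset.image (fun j : Fin L => (ρ ^ (j : ℕ)) x) Finset.univ := by
      ext y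
      rw [Equiv.Perm.mem_support_cycleOf_iff' (hρmove x)]
      constructor
      · rintro ⟨i, hi⟩
        have hL0 : (0 : ℤ) < L := by exact_mod_cast (by omega : 0 < L)
        have hjlt : (i % L).toNat < L := by
          have h1 : 0 ≤ i % L := Int.emod_nonneg i (by omega)
          have h2 : i % L < L := Int.emod_lt_of_pos i hL0
          omega
        refine Finset.mem_image.mpr ⟨⟨(i % L).toNat, hjlt⟩, Finset.mem_univ _, ?_⟩
        have : (ρ ^ (((i % L).toNat : ℕ) : ℤ)) x = (ρ ^ i) x := by
          rw [hρz, hρz, key]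
          apply hLdvd
          rw [Int.toNat_of_nonneg (Int.emod_nonneg i (by omega)), Int.emod_emod_of_dvd]
          exact dvd_refl _
        rw [← hi, ← this, zpow_natCast]
      · intro hy
        obtain ⟨j, _, hj⟩ := Finset.mem_image.mp hy
        exact ⟨(j : ℕ), by rw [zpow_natCast]; exact hj⟩
    rw [himg]
    rw [Finset.card_image_of_injective _ ?inj]
    · simp
    case inj =>
      intro j1 j2 h
      have h1 : (ρ ^ ((j1 : ℕ) : ℤ)) x = (ρ ^ ((j2 : ℕ) : ℤ)) x := by
        simpa [zpow_natCast] using h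
      rw [hρz, hρz, key] at h1
      have h2 : (N : ℤ) ∣ (g : ℤ) * ((j2 : ℕ) : ℤ) - (g : ℤ) * ((j1 : ℕ) : ℤ) :=
        Int.ModEq.dvd h1
      have h3 : (L : ℤ) ∣ ((j2 : ℕ) : ℤ) - ((j1 : ℕ) : ℤ) := by
        rcases h2 with ⟨c, hc⟩
        refine ⟨c, ?_⟩
        have hgz : (g : ℤ) ≠ 0 := by exact_mod_cast (by omega : g ≠ 0)
        have : (g : ℤ) * (((j2 : ℕ) : ℤ) - ((j1 : ℕ) : ℤ)) = (g : ℤ) * ((L : ℤ) * c) := by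
          rw [mul_sub, hc]
          push_cast [hNdef]
          ring
        exact mul_left_cancel₀ hgz this
      have hj1 : ((j1 : ℕ) : ℤ) < L := by exact_mod_cast j1.isLt
      have hj2 : ((j2 : ℕ) : ℤ) < L := by exact_mod_cast j2.isLt
      have : ((j1 : ℕ) : ℤ) = ((j2 : ℕ) : ℤ) := by
        rcases h3 with ⟨c, hc⟩
        have hj10 : (0:ℤ) ≤ ((j1 : ℕ) : ℤ) := by positivity
        have hj20 : (0:ℤ) ≤ ((j2 : ℕ) : ℤ) := by positivity
        have hL0 : (0:ℤ) < L := by exact_mod_cast (by omega : 0 < L)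
        rcases lt_trichotomy c 0 with h | h | h
        · nlinarith
        · subst h; simp at hc; omega
        · nlinarith
      exact Fin.ext (by exact_mod_cast this)
  -- all cycle lengths are L
  have hall : ∀ t ∈ ρ.cycleType, t = L := by
    intro t ht
    rw [Equiv.Perm.cycleType_def] at ht
    obtain ⟨c, hc, hct⟩ := Multiset.mem_map.mp ht
    have hcfac : c ∈ ρ.cycleFactorsFinset := by simpa using hc
    have hccyc : c.IsCycle := (Equiv.Perm.mem_cycleFactorsFinset_iff.mp hcfac).1
    obtain ⟨x, hx, -⟩ := hccyc
    have hxs : x ∈ c.support := Equiv.Perm.mem_support.mpr hx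
    have := Equiv.Perm.cycle_is_cycleOf hxs hcfac
    rw [← hct, this]
    exact hcardL x
  have hrep : ρ.cycleType = Multiset.replicate (Multiset.card ρ.cycleType) L :=
    Multiset.eq_replicate_card.mpr hall
  have hsuppρ : ρ.support = Finset.univ := Finset.eq_univ_iff_forall.mpr
    (fun x => Equiv.Perm.mem_support.mpr (hρmove x))
  have hsum : ρ.cycleType.sum = N := by
    rw [Equiv.Perm.sum_cycleType, hsuppρ]
    simp
  rw [hrep] at hsum ⊢
  rw [Multiset.sum_replicate, smul_eq_mul] at hsum
  have : Multiset.card ρ.cycleType = g := by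
    have hL0 : 0 < L := by omega
    exact Nat.eq_of_mul_eq_mul_right hL0 (by rw [hsum, hNdef])
  rw [this]

end Aux




/-- One Markov-type step on permutations: either conjugation within `S_{k+1}`, or
stabilization `ρ ↦ ι(ρ) · (k, k+1)` from `S_{k+1}` to `S_{k+2}`, where `ι` is the
standard inclusion and `(k, k+1)` the transposition of the last two points. -/
inductive MarkovStep :
    (Σ k : ℕ, Equiv.Perm (Fin (k + 1))) → (Σ k : ℕ, Equiv.Perm (Fin (k + 1))) → Prop
  | conj (k : ℕ) (σ τ : Equiv.Perm (Fin (k + 1))) : MarkovStep ⟨k, σ⟩ ⟨k, τ * σ * τ⁻¹⟩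
  | stab (k : ℕ) (σ : Equiv.Perm (Fin (k + 1))) :
      MarkovStep ⟨k, σ⟩
        ⟨k + 1, σ.viaFintypeEmbedding Fin.castSuccEmb *
          Equiv.swap (Fin.last k).castSucc (Fin.last (k + 1))⟩

lemma reach_uniform (L : ℕ) (N : ℕ) :
    ∀ (k : ℕ) (σ : Equiv.Perm (Fin (k+1))), (∀ o ∈ Ot k σ, o ≤ L) →
      ((Ot k σ).map (fun o => L - o)).sum = N →
      ∃ m : ℕ, k ≤ m ∧ ∃ τ : Equiv.Perm (Fin (m+1)),
        Relation.ReflTransGen MarkovStep ⟨k, σ⟩ ⟨m, τ⟩ ∧ ∀ o ∈ Ot m τ, o = L := by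
  induction N using Nat.strong_induction_on with
  | _ N ih =>
    intro k σ hle hsum
    by_cases hall : ∀ o ∈ Ot k σ, o = L
    · exact ⟨k, le_refl k, σ, Relation.ReflTransGen.refl, hall⟩
    · push_neg at hall
      obtain ⟨o, homem, honeL⟩ := hall
      have holt : o < L := lt_of_le_of_ne (hle o homem) honeL
      obtain ⟨π, hπ⟩ := conj_place k σ homem
      set σ₂ := π * σ * π⁻¹ with hσ₂
      have hOt₂ : Ot k σ₂ = Ot k σ := Ot_conj k σ π
      have step1 : MarkovStep ⟨k, σ⟩ ⟨k, σ₂⟩ := MarkovStep.conj k σ π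
      set σ₃ := σ₂.viaFintypeEmbedding Fin.castSuccEmb *
        Equiv.swap (Fin.last k).castSucc (Fin.last (k+1)) with hσ₃
      have step2 : MarkovStep ⟨k, σ₂⟩ ⟨k+1, σ₃⟩ := MarkovStep.stab k σ₂
      have hOt₃ : Ot (k+1) σ₃ = (o + 1) ::ₘ (Ot k σ).erase o := by
        rw [hσ₃, Ot_stab, hπ, hOt₂]
      have hle₃ : ∀ o' ∈ Ot (k+1) σ₃, o' ≤ L := by
        intro o' ho'
        rw [hOt₃] at ho'
        rcases Multiset.mem_cons.mp ho' with rfl | h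
        · omega
        · exact hle o' (Multiset.mem_of_mem_erase h)
      set t := (((Ot k σ).erase o).map (fun o => L - o)).sum with ht
      have hN : N = (L - o) + t := by
        rw [← hsum]
        conv_lhs => rw [← Multiset.cons_erase homem]
        rw [Multiset.map_cons, Multiset.sum_cons]
      have hsum₃ : ((Ot (k+1) σ₃).map (fun o => L - o)).sum = (L - (o+1)) + t := by
        rw [hOt₃, Multiset.map_cons, Multiset.sum_cons]
      have hlt : (L - (o+1)) + t < N := by omega
      obtain ⟨m, hkm, τ, hpath, hτ⟩ := ih _ hlt (k+1) σ₃ hle₃ hsum₃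
      refine ⟨m, by omega, τ, ?_, hτ⟩
      exact ((Relation.ReflTransGen.single step1).tail step2).trans hpath

/-- For any permutation `σ` (of `n+1` points), a finite sequence of conjugations and
stabilizations leads to a permutation `τ` of `m+1 ≥ n+1` points which is a power of
the full cycle `(1 2 ⋯ m+1)` (realized as `finRotate (m+1)`). -/
theorem stmt_16 (n : ℕ) (σ : Equiv.Perm (Fin (n + 1))) :
    ∃ m : ℕ, n ≤ m ∧ ∃ τ : Equiv.Perm (Fin (m + 1)),
      Relation.ReflTransGen MarkovStep ⟨n, σ⟩ ⟨m, τ⟩ ∧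
        ∃ p : ℕ, τ = finRotate (m + 1) ^ p := by

  classical
  set L := (Ot n σ).sup with hL
  have hle : ∀ o ∈ Ot n σ, o ≤ L := fun o ho => Multiset.le_sup ho
  obtain ⟨m, hnm, τ, hpath, hall⟩ := reach_uniform L _ n σ hle rfl
  set r := Multiset.card (Ot m τ) with hr
  have hrep : Ot m τ = Multiset.replicate r L := Multiset.eq_replicate_card.mpr hall
  have hsum : (Ot m τ).sum = m + 1 := by
    have h9 := sum_cycleType_le m τ
    simp only [Ot, Multiset.sum_add, Multiset.sum_replicate, smul_eq_mul, mul_one]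
    omega
  have hm1 : m + 1 = r * L := by
    rw [hrep, Multiset.sum_replicate, smul_eq_mul] at hsum
    omega
  by_cases hL2 : 2 ≤ L
  · -- no fixed points: cycleType τ = replicate r L
    have hf0 : m + 1 - τ.cycleType.sum = 0 := by
      by_contra hf
      have h1 : (1 : ℕ) ∈ Ot m τ := Multiset.mem_add.mpr (Or.inr
        (Multiset.mem_replicate.mpr ⟨hf, rfl⟩))
      have := hall 1 h1
      omega
    have hcyc : τ.cycleType = Multiset.replicate r L := by
      have : Ot m τ = τ.cycleType := by
        rw [Ot, hf0]
        simp
      rw [← this, hrep]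
    have hr1 : 1 ≤ r := by
      by_contra hr0
      have hr00 : r = 0 := by omega
      rw [hr00, zero_mul] at hm1
      omega
    have hfin : (finRotate (m+1) ^ r).cycleType = Multiset.replicate r L :=
      cycleType_finRotate_pow r L (m+1) hr1 hL2 hm1
    have hconj : IsConj τ (finRotate (m+1) ^ r) :=
      Equiv.Perm.isConj_of_cycleType_eq (by rw [hcyc, hfin])
    obtain ⟨π, hπ⟩ := isConj_iff.mp hconj
    have step : MarkovStep ⟨m, τ⟩ ⟨m, π * τ * π⁻¹⟩ := MarkovStep.conj m τ π
    rw [hπ] at step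
    exact ⟨m, hnm, finRotate (m+1) ^ r, hpath.tail step, r, rfl⟩
  · -- L ≤ 1: τ must be the identity
    have hL1 : L = 1 := by
      rcases (by omega : L = 0 ∨ L = 1) with h0 | h1
      · rw [h0, mul_zero] at hm1
        omega
      · exact h1
    have hcyc0 : τ.cycleType = 0 := by
      refine Multiset.eq_zero_of_forall_notMem (fun t ht => ?_)
      have h2 : 2 ≤ t := Equiv.Perm.two_le_of_mem_cycleType ht
      have : t ∈ Ot m τ := Multiset.mem_add.mpr (Or.inl ht)
      have := hall t this
      omega
    have hτ1 : τ = 1 := Equiv.Perm.cycleType_eq_zero.mp hcyc0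
    exact ⟨m, hnm, τ, hpath, 0, by rw [pow_zero, hτ1]⟩
end
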